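/- Let H be a real Hilbert space, α > 0, Γ : H → H α-quasicomonotone with zer Γ ≠ ∅, and let (λₜ) ⊂ [ε, 2α − ε] for some ε > 0. Define z^{t+1} = zᵗ − λₜ Γ(zᵗ). Then Γ(zᵗ) → 0 as t → ∞, and moreover Σₜ ‖Γ(zᵗ)‖² < ∞. -/
import Mathlib


open RealInnerProductSpace

/-- For a quasicomonotone operator with nonempty zero set, the iteration
`z^{t+1} = zᵗ − λₜ Γ(zᵗ)` with `λₜ ∈ [ε, 2α − ε]` satisfies `Γ(zᵗ) → 0`
and `∑ₜ ‖Γ(zᵗ)‖² < ∞`. -/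
theorem residual_convergence_quasicomonotone
    {H : Type*} [NormedAddCommGroup H] [InnerProductSpace ℝ H]
    (Γ : H → H) (α : ℝ) (hα : 0 < α)
    (hquasi : ∀ x y : H, Γ y = 0 → α * ‖Γ x‖ ^ 2 ≤ ⟪Γ x, x - y⟫)
    (hzer : ∃ y : H, Γ y = 0)
    (ε : ℝ) (hε : 0 < ε)
    (lam : ℕ → ℝ) (hlam : ∀ t, lam t ∈ Set.Icc ε (2 * α - ε))
    (z : ℕ → H) (hiter : ∀ t, z (t + 1) = z t - lam t • Γ (z t)) :
    Filter.Tendsto (fun t => Γ (z t)) Filter.atTop (nhds 0) ∧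
    Summable (fun t => ‖Γ (z t)‖ ^ 2) := by
  obtain ⟨y, hy⟩ := hzer
  have key : ∀ t, ε ^ 2 * ‖Γ (z t)‖ ^ 2 ≤ ‖z t - y‖ ^ 2 - ‖z (t + 1) - y‖ ^ 2 := by
    intro t
    obtain ⟨hl1, hl2⟩ := hlam t
    have hq := hquasi (z t) y hy
    have expand : ‖z (t + 1) - y‖ ^ 2
        = ‖z t - y‖ ^ 2 - 2 * lam t * ⟪Γ (z t), z t - y⟫ + lam t ^ 2 * ‖Γ (z t)‖ ^ 2 := by
      rw [hiter t]
      have h1 : z t - lam t • Γ (z t) - y = (z t - y) - lam t • Γ (z t) := by abel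
      rw [h1, @norm_sub_sq_real, inner_smul_right, norm_smul, mul_pow,
        Real.norm_eq_abs, sq_abs, real_inner_comm]
      ring
    have h3 : ε ^ 2 ≤ lam t * (2 * α - lam t) := by nlinarith [mul_nonneg (sub_nonneg.2 hl1) (sub_nonneg.2 hl2)]
    have h4 : ε ^ 2 * ‖Γ (z t)‖ ^ 2 ≤ lam t * (2 * α - lam t) * ‖Γ (z t)‖ ^ 2 :=
      mul_le_mul_of_nonneg_right h3 (sq_nonneg _)
    have h5 : 2 * lam t * (α * ‖Γ (z t)‖ ^ 2) ≤ 2 * lam t * ⟪Γ (z t), z t - y⟫ :=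
      mul_le_mul_of_nonneg_left hq (by linarith)
    nlinarith [h4, h5]
  have tel : ∀ n, ∑ t ∈ Finset.range n, ε ^ 2 * ‖Γ (z t)‖ ^ 2
      ≤ ‖z 0 - y‖ ^ 2 - ‖z n - y‖ ^ 2 := by
    intro n
    induction n with
    | zero => simp
    | succ n ih =>
      rw [Finset.sum_range_succ]
      have := key n
      linarith
  have hsum : Summable (fun t => ‖Γ (z t)‖ ^ 2) := by
    have h2 : Summable (fun t => ε ^ 2 * ‖Γ (z t)‖ ^ 2) := by
      apply summable_of_sum_range_le (c := ‖z 0 - y‖ ^ 2)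
      · intro t; positivity
      · intro n
        have := tel n
        nlinarith [sq_nonneg ‖z n - y‖]
    have := h2.mul_left (ε ^ 2)⁻¹
    refine this.congr fun t => ?_
    field_simp
  refine ⟨?_, hsum⟩
  have h0 : Filter.Tendsto (fun t => ‖Γ (z t)‖ ^ 2) Filter.atTop (nhds 0) :=
    hsum.tendsto_atTop_zero
  have h1 : Filter.Tendsto (fun t => ‖Γ (z t)‖) Filter.atTop (nhds 0) := by
    have := (Real.continuous_sqrt.tendsto 0).comp h0
    simpa [Function.comp_def, Real.sqrt_sq (norm_nonneg _)] using this
  exact tendsto_zero_iff_norm_tendsto_zero.2 h1
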